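/- arXiv:2006.11428 — 2 statements merged into one kernel-verified Lean document; each statement's English description precedes it below -/
import Mathlib

section
/- Every chaotic operator on a Fréchet space is reiteratively hypercyclic. That is, if X is a Fréchet space and T : X → X is a continuous linear operator that is hypercyclic and has a dense set of periodic points, then T admits a vector x such that for every non-empty open set U ⊆ X the set {n ∈ ℕ : T^n x ∈ U} has positive upper Banach density. -/
open Filter Topology Set

noncomputable def lowerDensity (A : Set ℕ) : ℝ :=
  Filter.atTop.liminf fun N : ℕ => ((A ∩ Set.Iic N).ncard : ℝ) / (N + 1)

noncomputable def upperDensity (A : Set ℕ) : ℝ :=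
  Filter.atTop.limsup fun N : ℕ => ((A ∩ Set.Iic N).ncard : ℝ) / (N + 1)

noncomputable def upperBanachDensity (A : Set ℕ) : ℝ :=
  Filter.atTop.limsup fun N : ℕ =>
    ⨆ m : ℕ, (((A ∩ Set.Icc m (m + N)).ncard : ℝ) / (N + 1))

/-- A set of naturals is syndetic if it has bounded gaps. -/
def Syndetic (A : Set ℕ) : Prop :=
  ∃ m : ℕ, ∀ n : ℕ, ∃ k ∈ A, n ≤ k ∧ k < n + m

/-- A set of naturals is an IP-set if it contains all finite sums of distinct terms of some
strictly increasing sequence of positive integers. -/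
def IsIPSet (A : Set ℕ) : Prop :=
  ∃ k : ℕ → ℕ, StrictMono k ∧ (∀ i, 0 < k i) ∧
    ∀ s : Finset ℕ, s.Nonempty → (∑ j ∈ s, k j) ∈ A

/-- A set of naturals is an IP*-set if it meets every IP-set. -/
def IsIPStarSet (A : Set ℕ) : Prop :=
  ∀ B : Set ℕ, IsIPSet B → (A ∩ B).Nonempty

/-- The return set N(x,U) = {n : T^n x ∈ U}. -/
def returnSet {X : Type*} (T : X → X) (x : X) (U : Set X) : Set ℕ :=
  {n : ℕ | T^[n] x ∈ U}

def IsRecurrentVec {X : Type*} [TopologicalSpace X] (T : X → X) (x : X) : Prop :=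
  ∀ U ∈ nhds x, (returnSet T x U).Infinite

def IsUniformlyRecurrentVec {X : Type*} [TopologicalSpace X] (T : X → X) (x : X) : Prop :=
  ∀ U ∈ nhds x, Syndetic (returnSet T x U)

def IsFrequentlyRecurrentVec {X : Type*} [TopologicalSpace X] (T : X → X) (x : X) : Prop :=
  ∀ U ∈ nhds x, 0 < lowerDensity (returnSet T x U)

def IsUpperFrequentlyRecurrentVec {X : Type*} [TopologicalSpace X] (T : X → X) (x : X) : Prop :=
  ∀ U ∈ nhds x, 0 < upperDensity (returnSet T x U)

def IsReiterativelyRecurrentVec {X : Type*} [TopologicalSpace X] (T : X → X) (x : X) : Prop :=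
  ∀ U ∈ nhds x, 0 < upperBanachDensity (returnSet T x U)

def IsIPStarRecurrentVec {X : Type*} [TopologicalSpace X] (T : X → X) (x : X) : Prop :=
  ∀ U ∈ nhds x, IsIPStarSet (returnSet T x U)

def IsHypercyclicVec {X : Type*} [TopologicalSpace X] (T : X → X) (x : X) : Prop :=
  Dense (Set.range fun n : ℕ => T^[n] x)

def IsFrequentlyHypercyclicVec {X : Type*} [TopologicalSpace X] (T : X → X) (x : X) : Prop :=
  ∀ U : Set X, IsOpen U → U.Nonempty → 0 < lowerDensity (returnSet T x U)

def IsUpperFrequentlyHypercyclicVec {X : Type*} [TopologicalSpace X] (T : X → X) (x : X) : Prop :=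
  ∀ U : Set X, IsOpen U → U.Nonempty → 0 < upperDensity (returnSet T x U)

def IsReiterativelyHypercyclicVec {X : Type*} [TopologicalSpace X] (T : X → X) (x : X) : Prop :=
  ∀ U : Set X, IsOpen U → U.Nonempty → 0 < upperBanachDensity (returnSet T x U)

/-- Power boundedness: the iterates form an equicontinuous family (at zero). -/
def PowerBounded {X : Type*} [Zero X] [TopologicalSpace X] (T : X → X) : Prop :=
  ∀ W₁ ∈ nhds (0 : X), ∃ W₂ ∈ nhds (0 : X), ∀ n : ℕ, ∀ x ∈ W₂, T^[n] x ∈ W₁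

/-- The cut-shift-and-paste property for a family of subsets of ℕ. -/
def CuSP (F : Set ℕ → Prop) : Prop :=
  ∀ q : ℕ, 0 < q → ∀ I : Fin q → Set ℕ, (⋃ j, I j) = Set.univ →
    ∀ shift : Fin q → ℕ, ∀ A : Set ℕ, F A →
      F (⋃ j, (fun k => shift j + k) '' (A ∩ I j))

/-!
Every hypercyclic vector `y` of a chaotic operator is reiteratively hypercyclic. Given a non-empty
open `U`, pick a periodic point `p ∈ U` of period `d`. For each `K` the open set
`⋂_{j ≤ K} T^{-jd} U` contains `p`, so the dense orbit of `y` enters it at some time `n`; then the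
window `[n, n + Kd]` contains the `K + 1` return times `n + jd`, and the upper Banach density of the
return set is at least `1 / d`.
-/

open Function

lemma ncard_inter_Icc_div_le_one (A : Set ℕ) (m N : ℕ) :
    ((A ∩ Icc m (m + N)).ncard : ℝ) / (N + 1) ≤ 1 := by
  rw [div_le_one (by positivity)]
  have h := ncard_le_ncard (inter_subset_right (s := A)) (finite_Icc m (m + N))
  rw [ncard_Icc_nat] at h
  exact_mod_cast (by omega : (A ∩ Icc m (m + N)).ncard ≤ N + 1)

lemma le_upperBanachDensity_of_frequently {A : Set ℕ} {c : ℝ}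
    (h : ∃ᶠ N in atTop, ∃ m, c ≤ ((A ∩ Icc m (m + N)).ncard : ℝ) / (N + 1)) :
    c ≤ upperBanachDensity A := by
  have hbdd (N : ℕ) :
      BddAbove (range fun m : ℕ => ((A ∩ Icc m (m + N)).ncard : ℝ) / (N + 1)) :=
    ⟨1, by rintro _ ⟨m, rfl⟩; exact ncard_inter_Icc_div_le_one A m N⟩
  refine le_limsup_of_frequently_le (h.mono fun N ⟨m, hm⟩ => hm.trans (le_ciSup (hbdd N) m)) ?_
  exact isBoundedUnder_of ⟨1, fun N => Real.iSup_le (ncard_inter_Icc_div_le_one A · N) zero_le_one⟩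

lemma add_le_ncard_inter_Icc_of_forall_add_mul_mem {A : Set ℕ} {n d K : ℕ} (hd : 0 < d)
    (h : ∀ j ≤ K, n + j * d ∈ A) : K + 1 ≤ (A ∩ Icc n (n + K * d)).ncard := by
  have hsub : ↑((Finset.range (K + 1)).image fun j => n + j * d) ⊆ A ∩ Icc n (n + K * d) := by
    intro x hx
    simp only [Finset.coe_image, Finset.coe_range, mem_image, mem_Iio] at hx
    obtain ⟨j, hj, rfl⟩ := hx
    have : j * d ≤ K * d := Nat.mul_le_mul_right d (by omega)
    exact ⟨h j (by omega), by omega, by omega⟩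
  have hinj : Injective fun j => n + j * d := fun a b hab =>
    Nat.eq_of_mul_eq_mul_right hd (Nat.add_left_cancel hab)
  have h := ncard_le_ncard hsub ((finite_Icc _ _).subset inter_subset_right)
  rwa [ncard_coe_finset, Finset.card_image_of_injective _ hinj, Finset.card_range] at h

lemma one_div_le_upperBanachDensity_of_forall_add_mul_mem {A : Set ℕ} {d : ℕ} (hd : 0 < d)
    (h : ∀ K, ∃ n, ∀ j ≤ K, n + j * d ∈ A) : 1 / d ≤ upperBanachDensity A := by
  refine le_upperBanachDensity_of_frequently (frequently_atTop.2 fun K => ?_)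
  obtain ⟨n, hn⟩ := h K
  refine ⟨K * d, Nat.le_mul_of_pos_right K hd, n, ?_⟩
  have hcard : (K : ℝ) + 1 ≤ (A ∩ Icc n (n + K * d)).ncard := by
    exact_mod_cast add_le_ncard_inter_Icc_of_forall_add_mul_mem hd hn
  have hd' : (1 : ℝ) ≤ d := by exact_mod_cast hd
  rw [div_le_div_iff₀ (by positivity) (by positivity)]
  push_cast
  nlinarith

section Dynamics

variable {X : Type*} [TopologicalSpace X] {T : X → X} {y : X}

lemma IsHypercyclicVec.exists_forall_add_mul_mem_returnSet (hy : IsHypercyclicVec T y)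
    (hT : Continuous T) {U : Set X} (hU : IsOpen U) {p : X} {d : ℕ} (hp : IsPeriodicPt T d p)
    (hpU : p ∈ U) (K : ℕ) : ∃ n, ∀ j ≤ K, n + j * d ∈ returnSet T y U := by
  set W := ⋂ j ∈ Finset.Iic K, T^[j * d] ⁻¹' U
  have hW : IsOpen W := isOpen_biInter_finset fun j _ => hU.preimage (hT.iterate _)
  have hpW : p ∈ W := mem_iInter₂.2 fun j _ => by
    simpa only [mem_preimage, (hp.const_mul j).eq] using hpU
  obtain ⟨_, ⟨n, rfl⟩, hnW⟩ := hy.exists_mem_open hW ⟨p, hpW⟩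
  refine ⟨n, fun j hj => ?_⟩
  have hmem : T^[n] y ∈ T^[j * d] ⁻¹' U := mem_iInter₂.1 hnW j (Finset.mem_Iic.2 hj)
  rwa [returnSet, mem_ofPred_eq, add_comm, iterate_add_apply]

theorem IsHypercyclicVec.isReiterativelyHypercyclicVec (hy : IsHypercyclicVec T y)
    (hT : Continuous T) (hper : Dense {x : X | ∃ n : ℕ, 1 ≤ n ∧ T^[n] x = x}) :
    IsReiterativelyHypercyclicVec T y := by
  intro U hU hUne
  obtain ⟨p, ⟨d, hd, hp⟩, hpU⟩ := hper.exists_mem_open hU hUne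
  have hd' : (0 : ℝ) < d := by exact_mod_cast hd
  exact (one_div_pos.2 hd').trans_le <| one_div_le_upperBanachDensity_of_forall_add_mul_mem hd <|
    hy.exists_forall_add_mul_mem_returnSet hT hU hp hpU

end Dynamics

theorem stmt1_general {𝕜 : Type*} [RCLike 𝕜] {X : Type*} [AddCommGroup X] [Module 𝕜 X]
    [UniformSpace X] (T : X →L[𝕜] X)
    (hhc : ∃ x : X, IsHypercyclicVec (⇑T) x)
    (hper : Dense {x : X | ∃ n : ℕ, 1 ≤ n ∧ (⇑T)^[n] x = x}) :
    ∃ x : X, IsReiterativelyHypercyclicVec (⇑T) x := by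
  obtain ⟨y, hy⟩ := hhc
  exact ⟨y, hy.isReiterativelyHypercyclicVec T.continuous hper⟩

theorem stmt1 {𝕜 : Type*} [RCLike 𝕜] {X : Type*} [AddCommGroup X] [Module 𝕜 X]
    [UniformSpace X] [IsUniformAddGroup X] [ContinuousSMul 𝕜 X] [CompleteSpace X]
    [TopologicalSpace.MetrizableSpace X] [Module ℝ X] [IsScalarTower ℝ 𝕜 X]
    [LocallyConvexSpace ℝ X] (T : X →L[𝕜] X)
    (hhc : ∃ x : X, IsHypercyclicVec (⇑T) x)
    (hper : Dense {x : X | ∃ n : ℕ, 1 ≤ n ∧ (⇑T)^[n] x = x}) :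
    ∃ x : X, IsReiterativelyHypercyclicVec (⇑T) x :=
  stmt1_general T hhc hper
end

section
/- Let X be a Fréchet space and T : X → X a continuous linear operator. The following assertions are equivalent: (a) T is upper frequently hypercyclic; (b) T is hypercyclic and the set UFRec(T) of upper frequently recurrent vectors is residual; (c) T is hypercyclic and UFRec(T) is of second category; (d) T admits a vector that is both hypercyclic and upper frequently recurrent. In that case the set of vectors that are both hypercyclic and upper frequently recurrent is residual, and moreover every vector that is both hypercyclic and upper frequently recurrent is upper frequently hypercyclic. -/
open Filter Topology Set

/-! If `T^[m] x ∈ U`, the returns of `x` to its neighbourhood `T^[m] ⁻¹' U`, shifted by `m`,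
are returns to `U`; as shifting a set of naturals does not change its upper density, a
hypercyclic, upper frequently recurrent vector is upper frequently hypercyclic.

Conversely, fix an upper frequently hypercyclic `x₀`. Since the density ratios at finite times
are lower semicontinuous in the vector, the vectors whose return sets to every basic open set are
at least as dense as those of `x₀` form a `Gδ` set; by shift invariance it contains the dense orbit
of `x₀`, so it is residual, and all its members are upper frequently hypercyclic. The other
implications are Baire category arguments, using that hypercyclic vectors form a dense `Gδ` set:
the orbit of a hypercyclic vector stays dense after removing finitely many points, since a
nontrivial topological vector space has no isolated points. -/

noncomputable def densityRatio (A : Set ℕ) (N : ℕ) : ℝ := ((A ∩ Iic N).ncard : ℝ) / (N + 1)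

section Density

variable {A B : Set ℕ}

lemma upperDensity_eq_limsup (A : Set ℕ) : upperDensity A = limsup (densityRatio A) atTop := rfl

lemma ncard_inter_Iic_le (A : Set ℕ) (N : ℕ) : (A ∩ Iic N).ncard ≤ N + 1 := by
  calc (A ∩ Iic N).ncard ≤ (Iic N).ncard := ncard_le_ncard inter_subset_right (finite_Iic N)
    _ = N + 1 := by rw [← Finset.coe_Iic, ncard_coe_finset, Nat.card_Iic]

lemma densityRatio_nonneg (A : Set ℕ) (N : ℕ) : 0 ≤ densityRatio A N := by
  unfold densityRatio; positivity

lemma densityRatio_le_one (A : Set ℕ) (N : ℕ) : densityRatio A N ≤ 1 := by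
  rw [densityRatio, div_le_one (by positivity)]
  exact_mod_cast ncard_inter_Iic_le A N

lemma densityRatio_mono (h : A ⊆ B) (N : ℕ) : densityRatio A N ≤ densityRatio B N := by
  unfold densityRatio
  gcongr
  exact (finite_Iic N).subset inter_subset_right

lemma isBoundedUnder_le_densityRatio (A : Set ℕ) :
    IsBoundedUnder (· ≤ ·) atTop (densityRatio A) :=
  isBoundedUnder_of ⟨1, densityRatio_le_one A⟩

lemma isCoboundedUnder_le_densityRatio (A : Set ℕ) :
    IsCoboundedUnder (· ≤ ·) atTop (densityRatio A) :=
  (isBoundedUnder_of ⟨0, densityRatio_nonneg A⟩).isCoboundedUnder_le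

lemma upperDensity_mono (h : A ⊆ B) : upperDensity A ≤ upperDensity B :=
  limsup_le_limsup (Eventually.of_forall (densityRatio_mono h))
    (isCoboundedUnder_le_densityRatio A) (isBoundedUnder_le_densityRatio B)

lemma upperDensity_empty : upperDensity ∅ = 0 := by
  have : densityRatio ∅ = fun _ => 0 := funext fun N => by simp [densityRatio]
  rw [upperDensity_eq_limsup, this, limsup_const]

lemma nonempty_of_upperDensity_pos (h : 0 < upperDensity A) : A.Nonempty :=
  nonempty_iff_ne_empty.2 fun hA => by simp [hA, upperDensity_empty] at h

lemma le_upperDensity_iff {δ : ℝ} :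
    δ ≤ upperDensity A ↔
      ∀ i : ℕ, ∃ᶠ N in atTop, δ - 1 / (i + 1) < densityRatio A N := by
  refine ⟨fun h i => frequently_lt_of_lt_limsup (isCoboundedUnder_le_densityRatio A) ?_,
    fun h => ?_⟩
  · have : (0 : ℝ) < 1 / (i + 1) := by positivity
    rw [← upperDensity_eq_limsup]; linarith
  · by_contra! hlt
    obtain ⟨i, hi⟩ := exists_nat_one_div_lt (sub_pos.2 hlt)
    have := le_limsup_of_frequently_le ((h i).mono fun _ => le_of_lt)
      (isBoundedUnder_le_densityRatio A)
    rw [← upperDensity_eq_limsup] at this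
    linarith

lemma upperDensity_le_of_ncard_le_add (k : ℕ)
    (h : ∀ N, (A ∩ Iic N).ncard ≤ (B ∩ Iic N).ncard + k) :
    upperDensity A ≤ upperDensity B := by
  set w : ℕ → ℝ := fun N => k / (N + 1)
  have hw : Tendsto w atTop (𝓝 0) := tendsto_const_div_atTop_nhds_zero_nat (k : ℝ) |>.comp
    (tendsto_add_atTop_nat 1) |>.congr fun N => by simp [w]
  have hle : ∀ N, densityRatio A N ≤ (densityRatio B + w) N := fun N => by
    simp only [Pi.add_apply, densityRatio, w, ← add_div]
    gcongr
    exact_mod_cast h N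
  have hw_bdd : IsBoundedUnder (· ≤ ·) atTop w := hw.isBoundedUnder_le
  calc upperDensity A ≤ limsup (densityRatio B + w) atTop :=
        limsup_le_limsup (Eventually.of_forall hle) (isCoboundedUnder_le_densityRatio A)
          (isBoundedUnder_le_add (isBoundedUnder_le_densityRatio B) hw_bdd)
    _ ≤ upperDensity B + limsup w atTop :=
        limsup_add_le (isBoundedUnder_of ⟨0, densityRatio_nonneg B⟩)
          (isBoundedUnder_le_densityRatio B) hw.isCoboundedUnder_le hw_bdd
    _ = upperDensity B := by rw [hw.limsup_eq, add_zero]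

lemma ncard_inter_Iic_le_preimage_add (A : Set ℕ) (k N : ℕ) :
    (A ∩ Iic N).ncard ≤ ((· + k) ⁻¹' A ∩ Iic N).ncard + k := by
  have hsub : A ∩ Iic N ⊆ (· + k) '' ((· + k) ⁻¹' A ∩ Iic N) ∪ Iio k := by
    rintro a ⟨ha, haN⟩
    rcases lt_or_ge a k with hak | hak
    · exact Or.inr hak
    · have hak' : a - k + k = a := Nat.sub_add_cancel hak
      refine Or.inl ⟨a - k, ⟨by simpa [hak'], ?_⟩, hak'⟩
      simp only [mem_Iic] at haN ⊢; omega
  calc (A ∩ Iic N).ncard ≤ ((· + k) '' ((· + k) ⁻¹' A ∩ Iic N) ∪ Iio k).ncard :=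
        ncard_le_ncard hsub ((((finite_Iic N).subset inter_subset_right).image _).union
          (finite_Iio k))
    _ ≤ ((· + k) '' ((· + k) ⁻¹' A ∩ Iic N)).ncard + (Iio k).ncard := ncard_union_le _ _
    _ = ((· + k) ⁻¹' A ∩ Iic N).ncard + k := by
        rw [ncard_image_of_injective _ (add_left_injective k), ← Finset.coe_Iio,
          ncard_coe_finset, Nat.card_Iio]

lemma ncard_preimage_add_inter_Iic_le (A : Set ℕ) (k N : ℕ) :
    ((· + k) ⁻¹' A ∩ Iic N).ncard ≤ (A ∩ Iic N).ncard + k := by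
  have hsub : (· + k) '' ((· + k) ⁻¹' A ∩ Iic N) ⊆ A ∩ Iic N ∪ Ioc N (N + k) := by
    rintro _ ⟨n, ⟨hn, hnN⟩, rfl⟩
    rcases le_or_gt (n + k) N with h | h
    · exact Or.inl ⟨hn, h⟩
    · exact Or.inr ⟨h, show n + k ≤ N + k by simp only [mem_Iic] at hnN; omega⟩
  calc ((· + k) ⁻¹' A ∩ Iic N).ncard = ((· + k) '' ((· + k) ⁻¹' A ∩ Iic N)).ncard :=
        (ncard_image_of_injective _ (add_left_injective k)).symm
    _ ≤ (A ∩ Iic N ∪ Ioc N (N + k)).ncard :=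
        ncard_le_ncard hsub (((finite_Iic N).subset inter_subset_right).union (finite_Ioc _ _))
    _ ≤ (A ∩ Iic N).ncard + (Ioc N (N + k)).ncard := ncard_union_le _ _
    _ = (A ∩ Iic N).ncard + k := by
        rw [← Finset.coe_Ioc, ncard_coe_finset, Nat.card_Ioc, Nat.add_sub_cancel_left]

lemma upperDensity_preimage_add_right (A : Set ℕ) (k : ℕ) :
    upperDensity ((· + k) ⁻¹' A) = upperDensity A :=
  le_antisymm (upperDensity_le_of_ncard_le_add k (ncard_preimage_add_inter_Iic_le A k))
    (upperDensity_le_of_ncard_le_add k (ncard_inter_Iic_le_preimage_add A k))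

end Density

section Orbits

variable {X : Type*} {f : X → X} {x : X}

lemma returnSet_mono {U V : Set X} (h : U ⊆ V) : returnSet f x U ⊆ returnSet f x V :=
  fun _ hn => h hn

lemma returnSet_iterate (x : X) (U : Set X) (k : ℕ) :
    returnSet f (f^[k] x) U = (· + k) ⁻¹' returnSet f x U := by
  ext n
  simp [returnSet, Function.iterate_add_apply]

lemma returnSet_preimage_iterate (x : X) (U : Set X) (k : ℕ) :
    returnSet f x (f^[k] ⁻¹' U) = returnSet f (f^[k] x) U := by
  ext n
  simp [returnSet, ← Function.iterate_add_apply, add_comm]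

lemma upperDensity_returnSet_iterate (x : X) (U : Set X) (k : ℕ) :
    upperDensity (returnSet f (f^[k] x) U) = upperDensity (returnSet f x U) := by
  rw [returnSet_iterate, upperDensity_preimage_add_right]

lemma densityRatio_returnSet_eq_sum (f : X → X) (x : X) (U : Set X) (N : ℕ) :
    densityRatio (returnSet f x U) N =
      ∑ n ∈ Finset.range (N + 1),
        (f^[n] ⁻¹' U).indicator (fun _ => 1 / ((N : ℝ) + 1)) x := by
  classical
  have hcard : returnSet f x U ∩ Iic N = ↑((Finset.range (N + 1)).filter (f^[·] x ∈ U)) := by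
    ext n
    simp [returnSet, and_comm]
  simp only [densityRatio, hcard, ncard_coe_finset, Finset.card_filter, indicator_apply,
    mem_preimage, Nat.cast_sum, Finset.sum_div]
  refine Finset.sum_congr rfl fun n _ => ?_
  split_ifs <;> simp

variable [TopologicalSpace X]

lemma IsUpperFrequentlyHypercyclicVec.isHypercyclicVec
    (hx : IsUpperFrequentlyHypercyclicVec f x) : IsHypercyclicVec f x := by
  refine dense_iff_inter_open.2 fun U hU hne => ?_
  obtain ⟨n, hn⟩ := nonempty_of_upperDensity_pos (hx U hU hne)
  exact ⟨f^[n] x, hn, n, rfl⟩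

lemma IsUpperFrequentlyHypercyclicVec.isUpperFrequentlyRecurrentVec
    (hx : IsUpperFrequentlyHypercyclicVec f x) : IsUpperFrequentlyRecurrentVec f x := by
  intro U hU
  obtain ⟨V, hVU, hV, hxV⟩ := mem_nhds_iff.1 hU
  exact (hx V hV ⟨x, hxV⟩).trans_le (upperDensity_mono (returnSet_mono hVU))

lemma IsHypercyclicVec.isUpperFrequentlyHypercyclicVec (hf : Continuous f)
    (hx : IsHypercyclicVec f x) (hrec : IsUpperFrequentlyRecurrentVec f x) :
    IsUpperFrequentlyHypercyclicVec f x := by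
  intro U hU hne
  obtain ⟨_, ⟨m, rfl⟩, hmU⟩ := hx.exists_mem_open hU hne
  have hV : f^[m] ⁻¹' U ∈ 𝓝 x := (hU.preimage (hf.iterate m)).mem_nhds hmU
  simpa [returnSet_preimage_iterate, upperDensity_returnSet_iterate] using hrec _ hV

lemma IsHypercyclicVec.iterate [T1Space X] [∀ y : X, NeBot (𝓝[≠] y)]
    (hx : IsHypercyclicVec f x) (k : ℕ) : IsHypercyclicVec f (f^[k] x) := by
  refine (hx.sdiff_finite ((finite_Iio k).image fun n => f^[n] x)).mono ?_
  rintro _ ⟨⟨n, rfl⟩, hn⟩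
  have hkn : k ≤ n := not_lt.1 fun hlt => hn ⟨n, hlt, rfl⟩
  refine ⟨n - k, ?_⟩
  simp only [← Function.iterate_add_apply, Nat.sub_add_cancel hkn]

lemma IsHypercyclicVec.separableSpace (hx : IsHypercyclicVec f x) :
    TopologicalSpace.SeparableSpace X :=
  ⟨⟨_, countable_range _, hx⟩⟩

lemma isGδ_setOf_isHypercyclicVec [SecondCountableTopology X] (hf : Continuous f) :
    IsGδ {x | IsHypercyclicVec f x} := by
  have hb := TopologicalSpace.isBasis_countableBasis X
  have : {x | IsHypercyclicVec f x} =
      ⋂ U ∈ TopologicalSpace.countableBasis X, ⋃ n, f^[n] ⁻¹' U := by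
    ext x
    simp only [mem_ofPred_eq, IsHypercyclicVec, hb.dense_iff, mem_iInter₂, mem_iUnion,
      mem_preimage]
    refine forall₂_congr fun U hU => ?_
    obtain ⟨y, hy⟩ := TopologicalSpace.nonempty_of_mem_countableBasis hU
    constructor
    · rintro h
      obtain ⟨_, hzU, n, rfl⟩ := h ⟨y, hy⟩
      exact ⟨n, hzU⟩
    · rintro ⟨n, hn⟩ -
      exact ⟨_, hn, n, rfl⟩
  rw [this]
  exact .biInter_of_isOpen (TopologicalSpace.countable_countableBasis X) fun U hU =>
    isOpen_iUnion fun n => (TopologicalSpace.isOpen_of_mem_countableBasis hU).preimage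
      (hf.iterate n)

lemma setOf_isHypercyclicVec_mem_residual [SecondCountableTopology X] [T1Space X]
    [∀ y : X, NeBot (𝓝[≠] y)] (hf : Continuous f) (hx : IsHypercyclicVec f x) :
    {x | IsHypercyclicVec f x} ∈ residual X :=
  residual_of_dense_Gδ (isGδ_setOf_isHypercyclicVec hf) (hx.mono (range_subset_iff.2 hx.iterate))

lemma lowerSemicontinuous_densityRatio_returnSet (hf : Continuous f) {U : Set X} (hU : IsOpen U)
    (N : ℕ) : LowerSemicontinuous fun x => densityRatio (returnSet f x U) N := by
  simp only [densityRatio_returnSet_eq_sum]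
  exact lowerSemicontinuous_sum fun n _ =>
    (hU.preimage (hf.iterate n)).lowerSemicontinuous_indicator (by positivity)

lemma isGδ_setOf_le_upperDensity_returnSet (hf : Continuous f) {U : Set X} (hU : IsOpen U)
    (δ : ℝ) : IsGδ {x | δ ≤ upperDensity (returnSet f x U)} := by
  have : {x | δ ≤ upperDensity (returnSet f x U)} =
      ⋂ (i : ℕ) (k : ℕ), ⋃ (N) (_ : k ≤ N),
        {x | δ - 1 / (i + 1) < densityRatio (returnSet f x U) N} := by
    ext x
    simp [le_upperDensity_iff, frequently_atTop]
  rw [this]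
  exact .iInter fun i => .iInter_of_isOpen fun k => isOpen_iUnion fun N => isOpen_iUnion fun _ =>
    (lowerSemicontinuous_densityRatio_returnSet hf hU N).isOpen_preimage _

lemma setOf_isUpperFrequentlyHypercyclicVec_mem_residual [SecondCountableTopology X]
    (hf : Continuous f) {x₀ : X} (hx₀ : IsUpperFrequentlyHypercyclicVec f x₀) :
    {x | IsUpperFrequentlyHypercyclicVec f x} ∈ residual X := by
  open TopologicalSpace in
  set S := ⋂ U ∈ countableBasis X,
    {x | upperDensity (returnSet f x₀ U) ≤ upperDensity (returnSet f x U)}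
  have hS : IsGδ S := .biInter (countable_countableBasis X) fun U hU =>
    isGδ_setOf_le_upperDensity_returnSet hf (isOpen_of_mem_countableBasis hU) _
  have horbit : range (f^[·] x₀) ⊆ S := by
    rintro _ ⟨k, rfl⟩
    simp only [S, mem_iInter₂]
    exact fun U _ => (upperDensity_returnSet_iterate x₀ U k).ge
  refine mem_of_superset (residual_of_dense_Gδ hS (hx₀.isHypercyclicVec.mono horbit)) ?_
  intro x hx U hU ⟨y, hy⟩
  obtain ⟨V, hVb, hyV, hVU⟩ := (isBasis_countableBasis X).exists_subset_of_mem_open hy hU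
  calc 0 < upperDensity (returnSet f x₀ V) :=
        hx₀ V (isOpen_of_mem_countableBasis hVb) ⟨y, hyV⟩
    _ ≤ upperDensity (returnSet f x V) := mem_iInter₂.1 hx V hVb
    _ ≤ upperDensity (returnSet f x U) := upperDensity_mono (returnSet_mono hVU)

end Orbits

lemma setOf_isHypercyclicVec_mem_residual_of_module {𝕜 X : Type*} [NontriviallyNormedField 𝕜]
    [AddCommGroup X] [Module 𝕜 X] [TopologicalSpace X] [IsTopologicalAddGroup X]
    [ContinuousSMul 𝕜 X] [T1Space X] [SecondCountableTopology X] (T : X →L[𝕜] X) {x₀ : X}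
    (hx₀ : IsHypercyclicVec T x₀) : {x | IsHypercyclicVec T x} ∈ residual X := by
  rcases subsingleton_or_nontrivial X with hX | hX
  · exact mem_of_superset univ_mem fun x _ => Subsingleton.elim x₀ x ▸ hx₀
  · have := Module.punctured_nhds_neBot 𝕜 X
    exact setOf_isHypercyclicVec_mem_residual T.continuous hx₀

theorem stmt2_general {𝕜 : Type*} [RCLike 𝕜] {X : Type*} [AddCommGroup X] [Module 𝕜 X]
    [UniformSpace X] [IsUniformAddGroup X] [ContinuousSMul 𝕜 X] [CompleteSpace X]
    [TopologicalSpace.MetrizableSpace X] (T : X →L[𝕜] X) :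
    [∃ x : X, IsUpperFrequentlyHypercyclicVec (⇑T) x,
     (∃ x : X, IsHypercyclicVec (⇑T) x) ∧
       {x : X | IsUpperFrequentlyRecurrentVec (⇑T) x} ∈ residual X,
     (∃ x : X, IsHypercyclicVec (⇑T) x) ∧
       ¬ IsMeagre {x : X | IsUpperFrequentlyRecurrentVec (⇑T) x},
     ∃ x : X, IsHypercyclicVec (⇑T) x ∧ IsUpperFrequentlyRecurrentVec (⇑T) x].TFAE ∧
    ((∃ x : X, IsUpperFrequentlyHypercyclicVec (⇑T) x) →
      {x : X | IsHypercyclicVec (⇑T) x ∧ IsUpperFrequentlyRecurrentVec (⇑T) x} ∈ residual X) ∧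
    (∀ x : X, IsHypercyclicVec (⇑T) x → IsUpperFrequentlyRecurrentVec (⇑T) x →
      IsUpperFrequentlyHypercyclicVec (⇑T) x) := by
  have : (uniformity X).IsCountablyGenerated := IsUniformAddGroup.uniformity_countably_generated
  have hufhc (x : X) (hx : IsHypercyclicVec T x) (hr : IsUpperFrequentlyRecurrentVec T x) :
      IsUpperFrequentlyHypercyclicVec T x :=
    hx.isUpperFrequentlyHypercyclicVec T.continuous hr
  have hres : (∃ x, IsUpperFrequentlyHypercyclicVec T x) →
      {x | IsHypercyclicVec T x ∧ IsUpperFrequentlyRecurrentVec T x} ∈ residual X := by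
    rintro ⟨x₀, hx₀⟩
    have := hx₀.isHypercyclicVec.separableSpace
    exact mem_of_superset (setOf_isUpperFrequentlyHypercyclicVec_mem_residual T.continuous hx₀)
      fun x hx => ⟨hx.isHypercyclicVec, hx.isUpperFrequentlyRecurrentVec⟩
  refine ⟨?_, hres, hufhc⟩
  tfae_have 1 → 2 := fun ⟨x₀, hx₀⟩ => ⟨⟨x₀, hx₀.isHypercyclicVec⟩,
    mem_of_superset (hres ⟨x₀, hx₀⟩) fun _ hx => hx.2⟩
  tfae_have 2 → 3 := fun ⟨hhc, hS⟩ => ⟨hhc, not_isMeagre_of_mem_residual hS⟩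
  tfae_have 3 → 4 := by
    rintro ⟨⟨x₀, hx₀⟩, hS⟩
    have := hx₀.separableSpace
    by_contra! h
    exact hS (mem_of_superset (setOf_isHypercyclicVec_mem_residual_of_module T hx₀) h)
  tfae_have 4 → 1 := fun ⟨x, hx, hr⟩ => ⟨x, hufhc x hx hr⟩
  tfae_finish

theorem stmt2 {𝕜 : Type*} [RCLike 𝕜] {X : Type*} [AddCommGroup X] [Module 𝕜 X]
    [UniformSpace X] [IsUniformAddGroup X] [ContinuousSMul 𝕜 X] [CompleteSpace X]
    [TopologicalSpace.MetrizableSpace X] [Module ℝ X] [IsScalarTower ℝ 𝕜 X]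
    [LocallyConvexSpace ℝ X] (T : X →L[𝕜] X) :
    [∃ x : X, IsUpperFrequentlyHypercyclicVec (⇑T) x,
     (∃ x : X, IsHypercyclicVec (⇑T) x) ∧
       {x : X | IsUpperFrequentlyRecurrentVec (⇑T) x} ∈ residual X,
     (∃ x : X, IsHypercyclicVec (⇑T) x) ∧
       ¬ IsMeagre {x : X | IsUpperFrequentlyRecurrentVec (⇑T) x},
     ∃ x : X, IsHypercyclicVec (⇑T) x ∧ IsUpperFrequentlyRecurrentVec (⇑T) x].TFAE ∧
    ((∃ x : X, IsUpperFrequentlyHypercyclicVec (⇑T) x) →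
      {x : X | IsHypercyclicVec (⇑T) x ∧ IsUpperFrequentlyRecurrentVec (⇑T) x} ∈ residual X) ∧
    (∀ x : X, IsHypercyclicVec (⇑T) x → IsUpperFrequentlyRecurrentVec (⇑T) x →
      IsUpperFrequentlyHypercyclicVec (⇑T) x) :=
  stmt2_general T
end
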